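/- arXiv:1505.04123 — 8 statements merged into one kernel-verified Lean document; each statement's English description precedes it below -/
import Mathlib

section
/- The infimum over f in the RKHS of L(f) = max_{p ∈ Δ_n} ⟨−Y f̃(X), p⟩ + (1/2)‖f‖²_K equals −ρ_K²/2 when the margin ρ_K is positive, and the infimum is attained at f = ρ_K f* where f* is any unit-norm max-margin function. -/
/-!
With `v i = y_i φ̃_{x_i}`, write `m f := min_{p ∈ Δ} ∑ p_i ⟪f, v i⟫ = min_{p ∈ Δ} ⟨Y f̃(X), p⟩`
for the margin of `f`, so that `L f = -m f + ‖f‖² / 2`.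
The margin is positively homogeneous, hence `m f ≤ ρ ‖f‖` by normalizing `f` onto the unit
sphere, and then `L f ≥ -ρ ‖f‖ + ‖f‖² / 2 ≥ -ρ² / 2`, with equality exactly when `‖f‖ = ρ` and
`f` attains the margin `ρ ‖f‖`, as `ρ f*` does.
-/

open scoped RealInnerProductSpace

section PositivelyHomogeneous

variable {E : Type*} [NormedAddCommGroup E] [NormedSpace ℝ E] {m : E → ℝ}

theorem le_iSup_sphere_mul_norm (hm : ∀ c : ℝ, 0 ≤ c → ∀ f, m (c • f) = c * m f)
    (hb : BddAbove (Set.range fun g : {g : E // ‖g‖ = 1} => m g)) (f : E) :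
    m f ≤ (⨆ g : {g : E // ‖g‖ = 1}, m g) * ‖f‖ := by
  rcases eq_or_ne f 0 with rfl | hf
  · simpa using (hm 0 le_rfl 0).le
  have hnf : 0 < ‖f‖ := norm_pos_iff.2 hf
  set g : E := ‖f‖⁻¹ • f
  have hg : ‖g‖ = 1 := by rw [norm_smul, norm_inv, norm_norm, inv_mul_cancel₀ hnf.ne']
  have hfg : f = ‖f‖ • g := by rw [smul_inv_smul₀ hnf.ne']
  calc m f = m g * ‖f‖ := by rw [hfg, hm _ (norm_nonneg _), ← hfg, mul_comm]
    _ ≤ (⨆ g : {g : E // ‖g‖ = 1}, m g) * ‖f‖ :=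
      mul_le_mul_of_nonneg_right (le_ciSup hb ⟨g, hg⟩) hnf.le

end PositivelyHomogeneous

section Margin

variable {ι H : Type*} [Fintype ι] [NormedAddCommGroup H] [InnerProductSpace ℝ H]

noncomputable def simplexMargin (v : ι → H) (f : H) : ℝ :=
  ⨅ p : stdSimplex ℝ ι, ∑ i, (p : ι → ℝ) i * ⟪f, v i⟫

theorem simplexMargin_smul (v : ι → H) {c : ℝ} (hc : 0 ≤ c) (f : H) :
    simplexMargin v (c • f) = c * simplexMargin v f := by
  simp only [simplexMargin, Real.mul_iInf_of_nonneg hc, Finset.mul_sum, real_inner_smul_left,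
    mul_left_comm c]

theorem iSup_stdSimplex_neg_inner (v : ι → H) (f : H) :
    (⨆ p : stdSimplex ℝ ι, ∑ i, (p : ι → ℝ) i * (-⟪f, v i⟫)) = -simplexMargin v f := by
  have hneg (p : stdSimplex ℝ ι) :
      ∑ i, (p : ι → ℝ) i * (-⟪f, v i⟫) = -1 * ∑ i, (p : ι → ℝ) i * ⟪f, v i⟫ := by
    simp only [Finset.mul_sum, mul_neg, neg_one_mul]
  rw [simplexMargin, neg_eq_neg_one_mul, Real.mul_iInf_of_nonpos (by norm_num)]
  exact iSup_congr hneg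

end Margin

theorem stmt1_general (n : ℕ) {H : Type*} [NormedAddCommGroup H] [InnerProductSpace ℝ H]
    (v : Fin n → H)
    (L : H → ℝ)
    (hL : ∀ f, L f =
      (⨆ p : stdSimplex ℝ (Fin n), ∑ i, (p : Fin n → ℝ) i * (-⟪f, v i⟫)) + ‖f‖ ^ 2 / 2)
    (ρ : ℝ)
    (hρ : ρ = ⨆ f : {f : H // ‖f‖ = 1},
      ⨅ p : stdSimplex ℝ (Fin n), ∑ i, (p : Fin n → ℝ) i * ⟪(f : H), v i⟫)
    (hpos : 0 < ρ)
    (fstar : H) (hfs : ‖fstar‖ = 1)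
    (hmax : (⨅ p : stdSimplex ℝ (Fin n), ∑ i, (p : Fin n → ℝ) i * ⟪fstar, v i⟫) = ρ) :
    (∀ f, -(ρ ^ 2) / 2 ≤ L f) ∧ L (ρ • fstar) = -(ρ ^ 2) / 2 := by
  have hρ' : ρ = ⨆ g : {g : H // ‖g‖ = 1}, simplexMargin v g := hρ
  have hL' (f : H) : L f = -simplexMargin v f + ‖f‖ ^ 2 / 2 := by
    rw [hL, iSup_stdSimplex_neg_inner]
  -- An unbounded supremum is `0` in `ℝ`, so `0 < ρ` makes it a genuine one.
  have hb : BddAbove (Set.range fun g : {g : H // ‖g‖ = 1} => simplexMargin v g) := by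
    by_contra h
    rw [Real.iSup_of_not_bddAbove h] at hρ'
    exact hpos.ne' hρ'
  refine ⟨fun f => ?_, ?_⟩
  · have hmf := le_iSup_sphere_mul_norm (fun c hc => simplexMargin_smul v hc) hb f
    rw [← hρ'] at hmf
    rw [hL']
    nlinarith [sq_nonneg (‖f‖ - ρ)]
  · have hmax' : simplexMargin v fstar = ρ := hmax
    rw [hL', simplexMargin_smul v hpos.le, hmax', norm_smul, hfs, Real.norm_of_nonneg hpos.le]
    ring

theorem stmt1 (n : ℕ) [NeZero n] {H : Type*} [NormedAddCommGroup H] [InnerProductSpace ℝ H]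
    (v : Fin n → H) (hv : ∀ i, ‖v i‖ = 1)
    (L : H → ℝ)
    (hL : ∀ f, L f =
      (⨆ p : stdSimplex ℝ (Fin n), ∑ i, (p : Fin n → ℝ) i * (-⟪f, v i⟫)) + ‖f‖ ^ 2 / 2)
    (ρ : ℝ)
    (hρ : ρ = ⨆ f : {f : H // ‖f‖ = 1},
      ⨅ p : stdSimplex ℝ (Fin n), ∑ i, (p : Fin n → ℝ) i * ⟪(f : H), v i⟫)
    (hpos : 0 < ρ)
    (fstar : H) (hfs : ‖fstar‖ = 1)
    (hmax : (⨅ p : stdSimplex ℝ (Fin n), ∑ i, (p : Fin n → ℝ) i * ⟪fstar, v i⟫) = ρ) :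
    (∀ f, -(ρ ^ 2) / 2 ≤ L f) ∧ L (ρ • fstar) = -(ρ ^ 2) / 2 :=
  stmt1_general n v L hL ρ hρ hpos fstar hfs hmax
end

section
/- If a perfect separator exists in the RKHS (i.e., the margin ρ_K > 0), then there exists α ∈ ℝⁿ with Gα > 0 componentwise, where G is the normalized signed Gram matrix. -/
open Matrix
open scoped RealInnerProductSpace

/-!
A unit vector `f` of positive margin has `⟪f, v i⟫ > 0` for all `i`. Projecting `f` orthogonally
onto the span of the `v i` does not change these inner products, and writing the projection as
`∑ k, α k • v k` turns them into the entries of `G *ᵥ α`.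
-/

theorem Matrix.exists_gram_mulVec_eq_inner {𝕜 E ι : Type*} [RCLike 𝕜] [NormedAddCommGroup E]
    [InnerProductSpace 𝕜 E] [Fintype ι] (v : ι → E) (f : E) :
    ∃ α : ι → 𝕜, ∀ j, (gram 𝕜 v *ᵥ α) j = inner 𝕜 (v j) f := by
  set K : Submodule 𝕜 E := Submodule.span 𝕜 (Set.range v)
  have : FiniteDimensional 𝕜 K := FiniteDimensional.span_of_finite 𝕜 (Set.finite_range v)
  obtain ⟨α, hα⟩ := (Submodule.mem_span_range_iff_exists_fun 𝕜).mp (K.starProjection_apply_mem f)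
  refine ⟨α, fun j ↦ ?_⟩
  have hvj : v j ∈ K := Submodule.subset_span ⟨j, rfl⟩
  calc (gram 𝕜 v *ᵥ α) j = inner 𝕜 (v j) (∑ k, α k • v k) := by
        simp [mulVec, dotProduct, inner_sum, inner_smul_right, mul_comm]
    _ = inner 𝕜 (v j) f := by
        rw [hα, ← K.inner_starProjection_left_eq_right, K.starProjection_eq_self_iff.mpr hvj]

-- No boundedness is needed: an unbounded `⨆` over `ℝ` is `0`.
theorem Real.exists_pos_of_iSup_pos {ι : Type*} {g : ι → ℝ} (h : 0 < ⨆ i, g i) :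
    ∃ i, 0 < g i := by
  by_contra! hg
  exact h.not_ge (Real.iSup_nonpos hg)

theorem stmt5_general (n : ℕ) {H : Type*} [NormedAddCommGroup H] [InnerProductSpace ℝ H]
    (v : Fin n → H)
    (G : Matrix (Fin n) (Fin n) ℝ) (hG : ∀ i j, G i j = ⟪v i, v j⟫)
    (ρ : ℝ) (hρ : ρ = ⨆ f : {f : H // ‖f‖ = 1}, ⨅ i, ⟪(f : H), v i⟫)
    (hpos : 0 < ρ) :
    ∃ α : Fin n → ℝ, ∀ j, 0 < G.mulVec α j := by
  obtain ⟨f, hf⟩ := Real.exists_pos_of_iSup_pos (hρ ▸ hpos)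
  obtain ⟨α, hα⟩ := exists_gram_mulVec_eq_inner (𝕜 := ℝ) v (f : H)
  obtain rfl : G = gram ℝ v := Matrix.ext fun i j ↦ hG i j
  refine ⟨α, fun j ↦ ?_⟩
  rw [hα j, real_inner_comm]
  exact hf.trans_le (ciInf_le (Finite.bddBelow_range _) j)

theorem stmt5 (n : ℕ) [NeZero n] {H : Type*} [NormedAddCommGroup H] [InnerProductSpace ℝ H]
    (v : Fin n → H) (hv : ∀ i, ‖v i‖ = 1)
    (G : Matrix (Fin n) (Fin n) ℝ) (hG : ∀ i j, G i j = ⟪v i, v j⟫)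
    (ρ : ℝ) (hρ : ρ = ⨆ f : {f : H // ‖f‖ = 1}, ⨅ i, ⟪(f : H), v i⟫)
    (hpos : 0 < ρ) :
    ∃ α : Fin n → ℝ, ∀ j, 0 < G.mulVec α j :=
  stmt5_general n v G hG ρ hρ hpos
end

section
/- When ρ_K > 0, the margin admits the dual characterization ρ_K = sup_{αᵀGα = 1} min_{p ∈ Δ_n} pᵀGα, and consequently ρ_K ≤ √(pᵀGp) for every p ∈ Δ_n. -/
open Matrix
open scoped RealInnerProductSpace

lemma simplex_sum_ge {n : ℕ} (a : Fin n → ℝ) (b : ℝ) (hb : ∀ i, b ≤ a i)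
    (p : Fin n → ℝ) (hp : p ∈ stdSimplex ℝ (Fin n)) :
    b ≤ ∑ i, p i * a i := by
  have h1 : b = ∑ i, p i * b := by
    rw [← Finset.sum_mul, hp.2, one_mul]
  rw [h1]
  exact Finset.sum_le_sum fun i _ => mul_le_mul_of_nonneg_left (hb i) (hp.1 i)

lemma vertex_mem {n : ℕ} (i : Fin n) :
    (fun j => if j = i then (1:ℝ) else 0) ∈ stdSimplex ℝ (Fin n) := by
  constructor
  · intro j; dsimp only; split_ifs <;> norm_num
  · simp

lemma mulVec_inner {n : ℕ} {H : Type*} [NormedAddCommGroup H] [InnerProductSpace ℝ H]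
    (v : Fin n → H) (G : Matrix (Fin n) (Fin n) ℝ) (hG : ∀ i j, G i j = ⟪v i, v j⟫)
    (α : Fin n → ℝ) (i : Fin n) :
    G.mulVec α i = ⟪∑ j, α j • v j, v i⟫ := by
  simp only [mulVec, dotProduct, hG]
  rw [sum_inner]
  refine Finset.sum_congr rfl fun j _ => ?_
  rw [real_inner_smul_left, real_inner_comm, mul_comm]

lemma dot_mulVec {n : ℕ} {H : Type*} [NormedAddCommGroup H] [InnerProductSpace ℝ H]
    (v : Fin n → H) (G : Matrix (Fin n) (Fin n) ℝ) (hG : ∀ i j, G i j = ⟪v i, v j⟫)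
    (p α : Fin n → ℝ) :
    p ⬝ᵥ G.mulVec α = ∑ i, p i * ⟪∑ j, α j • v j, v i⟫ := by
  simp only [dotProduct, mulVec_inner v G hG]

lemma quad_eq {n : ℕ} {H : Type*} [NormedAddCommGroup H] [InnerProductSpace ℝ H]
    (v : Fin n → H) (G : Matrix (Fin n) (Fin n) ℝ) (hG : ∀ i j, G i j = ⟪v i, v j⟫)
    (α : Fin n → ℝ) :
    α ⬝ᵥ G.mulVec α = ‖∑ j, α j • v j‖ ^ 2 := by
  rw [dot_mulVec v G hG]
  have h : ∑ i, α i * ⟪∑ j, α j • v j, v i⟫ = ⟪∑ j, α j • v j, ∑ i, α i • v i⟫ := by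
    rw [inner_sum]
    refine Finset.sum_congr rfl fun i _ => ?_
    rw [real_inner_smul_right]
  rw [h, real_inner_self_eq_norm_sq]

theorem stmt6 (n : ℕ) [NeZero n] {H : Type*} [NormedAddCommGroup H] [InnerProductSpace ℝ H]
    (v : Fin n → H) (hv : ∀ i, ‖v i‖ = 1)
    (G : Matrix (Fin n) (Fin n) ℝ) (hG : ∀ i j, G i j = ⟪v i, v j⟫)
    (ρ : ℝ)
    (hρ : ρ = ⨆ f : {f : H // ‖f‖ = 1},
      ⨅ p : stdSimplex ℝ (Fin n), ∑ i, (p : Fin n → ℝ) i * ⟪(f : H), v i⟫)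
    (hpos : 0 < ρ) :
    ρ = sSup {r : ℝ | ∃ α : Fin n → ℝ, α ⬝ᵥ G.mulVec α = 1 ∧
        r = ⨅ p : stdSimplex ℝ (Fin n), (p : Fin n → ℝ) ⬝ᵥ G.mulVec α} ∧
      ∀ p ∈ stdSimplex ℝ (Fin n), ρ ≤ Real.sqrt (p ⬝ᵥ G.mulVec p) := by
  haveI : Nonempty (Fin n) := ⟨0⟩
  haveI hsne : Nonempty (stdSimplex ℝ (Fin n)) := ⟨⟨_, vertex_mem 0⟩⟩
  haveI hfne : Nonempty {f : H // ‖f‖ = 1} := ⟨⟨v 0, hv 0⟩⟩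
  set m : {f : H // ‖f‖ = 1} → ℝ := fun f =>
    ⨅ p : stdSimplex ℝ (Fin n), ∑ i, (p : Fin n → ℝ) i * ⟪(f : H), v i⟫ with hm
  -- basic bounds
  have hinner_bd : ∀ (f : {f : H // ‖f‖ = 1}) i, |⟪(f : H), v i⟫| ≤ 1 := by
    intro f i
    calc |⟪(f : H), v i⟫| ≤ ‖(f : H)‖ * ‖v i‖ := abs_real_inner_le_norm _ _
    _ = 1 := by rw [f.2, hv i, one_mul]
  have hbdd : ∀ f : {f : H // ‖f‖ = 1},
      BddBelow (Set.range fun p : stdSimplex ℝ (Fin n) =>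
        ∑ i, (p : Fin n → ℝ) i * ⟪(f : H), v i⟫) := by
    intro f
    refine ⟨-1, ?_⟩
    rintro _ ⟨p, rfl⟩
    exact simplex_sum_ge _ _ (fun i => neg_le_of_abs_le (hinner_bd f i)) _ p.2
  have hm_le : ∀ (f : {f : H // ‖f‖ = 1}) i, m f ≤ ⟪(f : H), v i⟫ := by
    intro f i
    have := ciInf_le (hbdd f) (⟨_, vertex_mem i⟩ : stdSimplex ℝ (Fin n))
    refine le_trans this (le_of_eq ?_)
    show ∑ j, (if j = i then (1:ℝ) else 0) * ⟪(f : H), v j⟫ = _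
    simp
  have hm_bddAbove : BddAbove (Set.range m) := by
    refine ⟨1, ?_⟩
    rintro _ ⟨f, rfl⟩
    exact (hm_le f 0).trans (le_of_abs_le (hinner_bd f 0))
  -- every element of S is ≤ ρ
  have hSle : ∀ r ∈ {r : ℝ | ∃ α : Fin n → ℝ, α ⬝ᵥ G.mulVec α = 1 ∧
      r = ⨅ p : stdSimplex ℝ (Fin n), (p : Fin n → ℝ) ⬝ᵥ G.mulVec α}, r ≤ ρ := by
    rintro r ⟨α, hα, rfl⟩
    have hq := quad_eq v G hG α
    rw [hα] at hq
    have hg : ‖∑ j, α j • v j‖ = 1 := by nlinarith [norm_nonneg (∑ j, α j • v j)]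
    have heq : (⨅ p : stdSimplex ℝ (Fin n), (p : Fin n → ℝ) ⬝ᵥ G.mulVec α)
        = m ⟨∑ j, α j • v j, hg⟩ := by
      refine iInf_congr fun p => ?_
      exact dot_mulVec v G hG _ α
    rw [heq, hρ]
    exact le_ciSup hm_bddAbove _
  -- construction: for any 0 < c < ρ there is r ∈ S with c < r
  have hconstruct : ∀ c : ℝ, 0 < c → c < ρ →
      ∃ r ∈ {r : ℝ | ∃ α : Fin n → ℝ, α ⬝ᵥ G.mulVec α = 1 ∧
        r = ⨅ p : stdSimplex ℝ (Fin n), (p : Fin n → ℝ) ⬝ᵥ G.mulVec α}, c < r := by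
    intro c hc hcρ
    rw [hρ] at hcρ
    obtain ⟨f, hf⟩ := exists_lt_of_lt_ciSup hcρ
    have hfi : ∀ i, c < ⟪(f : H), v i⟫ := fun i => lt_of_lt_of_le hf (hm_le f i)
    set W : Submodule ℝ H := Submodule.span ℝ (Set.range v) with hW
    haveI : FiniteDimensional ℝ W := FiniteDimensional.span_of_finite ℝ (Set.finite_range v)
    have hWv : ∀ i, v i ∈ W := fun i => Submodule.subset_span ⟨i, rfl⟩
    set f' : W := Submodule.orthogonalProjectionOnto W (f : H) with hf'
    have hinner : ∀ i, ⟪(f' : H), v i⟫ = ⟪(f : H), v i⟫ := by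
      intro i
      have h0 : ⟪(f : H) - (f' : H), v i⟫ = 0 := W.starProjection_inner_eq_zero (f : H) (v i) (hWv i)
      rw [inner_sub_left] at h0
      linarith
    have hne : (f' : H) ≠ 0 := by
      intro h
      have h1 := hinner 0
      rw [h, inner_zero_left] at h1
      linarith [hfi 0]
    have hnpos : 0 < ‖(f' : H)‖ := norm_pos_iff.2 hne
    have hnle : ‖(f' : H)‖ ≤ 1 := by
      have h1 : ‖(f' : H)‖ ≤ ‖Submodule.orthogonalProjectionOnto W‖ * ‖(f : H)‖ :=
        (Submodule.orthogonalProjectionOnto W).le_opNorm _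
      have h2 := Submodule.orthogonalProjectionOnto_norm_le W
      rw [f.2] at h1
      nlinarith
    set g : H := ‖(f' : H)‖⁻¹ • (f' : H) with hgdef
    have hgnorm : ‖g‖ = 1 := norm_smul_inv_norm hne
    have hgW : g ∈ W := W.smul_mem _ f'.2
    obtain ⟨α, hα⟩ := Submodule.mem_span_range_iff_exists_fun ℝ |>.1 hgW
    have hquad : α ⬝ᵥ G.mulVec α = 1 := by
      rw [quad_eq v G hG, hα, hgnorm, one_pow]
    have hfin : ∀ i, ⟪(f : H), v i⟫ ≤ ⟪g, v i⟫ := by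
      intro i
      rw [hgdef, real_inner_smul_left, hinner i]
      have h1 : 1 ≤ ‖(f' : H)‖⁻¹ := by
        rw [le_inv_comm₀ one_pos hnpos]
        simpa using hnle
      nlinarith [hfi i]
    refine ⟨_, ⟨α, hquad, rfl⟩, ?_⟩
    refine lt_of_lt_of_le hf ?_
    refine ciInf_mono (hbdd f) fun p => ?_
    rw [dot_mulVec v G hG _ α, hα]
    refine Finset.sum_le_sum fun i _ => ?_
    exact mul_le_mul_of_nonneg_left (hfin i) (p.2.1 i)
  constructor
  · -- equality with sSup
    obtain ⟨r₀, hr₀S, hr₀⟩ := hconstruct (ρ/2) (by linarith) (by linarith)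
    have hne : {r : ℝ | ∃ α : Fin n → ℝ, α ⬝ᵥ G.mulVec α = 1 ∧
        r = ⨅ p : stdSimplex ℝ (Fin n), (p : Fin n → ℝ) ⬝ᵥ G.mulVec α}.Nonempty := ⟨r₀, hr₀S⟩
    refine le_antisymm ?_ (csSup_le hne hSle)
    refine le_of_forall_lt fun c hc => ?_
    rcases le_or_gt c 0 with h0 | h0
    · exact lt_of_le_of_lt (h0.trans (by linarith)) (lt_of_lt_of_le hr₀ (le_csSup ⟨ρ, hSle⟩ hr₀S))
    · obtain ⟨r, hrS, hr⟩ := hconstruct c h0 hc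
      exact lt_of_lt_of_le hr (le_csSup ⟨ρ, hSle⟩ hrS)
  · -- bound by sqrt of quadratic form
    intro p hp
    rw [hρ]
    refine ciSup_le fun f => ?_
    have h1 : m f ≤ ∑ i, p i * ⟪(f : H), v i⟫ := ciInf_le (hbdd f) (⟨p, hp⟩ : stdSimplex ℝ (Fin n))
    have h2 : ∑ i, p i * ⟪(f : H), v i⟫ = ⟪(f : H), ∑ j, p j • v j⟫ := by
      rw [inner_sum]
      exact Finset.sum_congr rfl fun i _ => (real_inner_smul_right _ _ _).symm
    have h3 : ⟪(f : H), ∑ j, p j • v j⟫ ≤ ‖∑ j, p j • v j‖ := by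
      have := real_inner_le_norm (f : H) (∑ j, p j • v j)
      rw [f.2, one_mul] at this
      exact this
    have h4 : Real.sqrt (p ⬝ᵥ G.mulVec p) = ‖∑ j, p j • v j‖ := by
      rw [quad_eq v G hG p, Real.sqrt_sq (norm_nonneg _)]
    rw [h4]
    calc m f ≤ _ := h1
    _ = _ := h2
    _ ≤ _ := h3
end

section
/- Gordan's theorem in an RKHS: exactly one of the following holds: (1) there exists f ∈ F_K with y_i f(x_i) > 0 for all i; (2) there exists p ∈ Δ_n with Σ_i p_i y_i φ̃_{x_i} = 0 in F_K (equivalently pᵀGp = 0). -/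
open scoped RealInnerProductSpace

section

variable {H : Type*} [NormedAddCommGroup H] [InnerProductSpace ℝ H]

/-- The point `f` of `K` nearest to the origin satisfies `‖f‖² ≤ ⟪f, x⟫` for every `x ∈ K`. -/
theorem exists_forall_inner_pos_of_zero_notMem {K : Set H} (hK : IsComplete K)
    (hKc : Convex ℝ K) (h0 : (0 : H) ∉ K) : ∃ f : H, ∀ x ∈ K, 0 < ⟪f, x⟫ := by
  rcases K.eq_empty_or_nonempty with rfl | hne
  · exact ⟨0, by simp⟩
  obtain ⟨f, hfK, hmin⟩ := exists_norm_eq_iInf_of_complete_convex hne hK hKc 0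
  have hf : f ≠ 0 := fun h => h0 (h ▸ hfK)
  refine ⟨f, fun x hx => ?_⟩
  have hvar : ⟪0 - f, x - f⟫ ≤ 0 := (norm_eq_iInf_iff_real_inner_le_zero hKc hfK).1 hmin x hx
  have hnorm : 0 < ⟪f, f⟫ := real_inner_self_pos.2 hf
  rw [zero_sub, inner_neg_left, inner_sub_right] at hvar
  linarith

theorem sum_smul_ne_zero_of_forall_inner_pos {ι : Type*} [Fintype ι] {v : ι → H} {f : H}
    (hf : ∀ i, 0 < ⟪f, v i⟫) {p : ι → ℝ} (hp : p ∈ stdSimplex ℝ ι) :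
    ∑ i, p i • v i ≠ 0 := by
  intro hsum
  obtain ⟨i, -, hi⟩ := Finset.exists_ne_zero_of_sum_ne_zero (hp.2.symm ▸ one_ne_zero)
  have hpos : 0 < ∑ j, p j * ⟪f, v j⟫ :=
    Finset.sum_pos' (fun j _ => mul_nonneg (hp.1 j) (hf j).le)
      ⟨i, Finset.mem_univ i, mul_pos ((hp.1 i).lt_of_ne' hi) (hf i)⟩
  have hzero : ⟪f, ∑ j, p j • v j⟫ = ∑ j, p j * ⟪f, v j⟫ := by
    simp only [inner_sum, real_inner_smul_right]
  rw [hsum, inner_zero_right] at hzero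
  linarith

end

theorem stmt7_general (n : ℕ) {H : Type*} [NormedAddCommGroup H] [InnerProductSpace ℝ H]
    (v : Fin n → H) :
    Xor' (∃ f : H, ∀ i, 0 < ⟪f, v i⟫)
      (∃ p ∈ stdSimplex ℝ (Fin n), ∑ i, p i • v i = (0 : H)) := by
  by_cases hzero : ∃ p ∈ stdSimplex ℝ (Fin n), ∑ i, p i • v i = (0 : H)
  · obtain ⟨p, hp, hsum⟩ := hzero
    exact Or.inr ⟨⟨p, hp, hsum⟩, fun ⟨f, hf⟩ => sum_smul_ne_zero_of_forall_inner_pos hf hp hsum⟩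
  · refine Or.inl ⟨?_, hzero⟩
    set L := Fintype.linearCombination ℝ v
    have hcompact : IsCompact (L '' stdSimplex ℝ (Fin n)) :=
      (isCompact_stdSimplex ℝ (Fin n)).image (LinearMap.continuous_on_pi L)
    have h0 : (0 : H) ∉ L '' stdSimplex ℝ (Fin n) := fun ⟨p, hp, hsum⟩ => hzero ⟨p, hp, hsum⟩
    obtain ⟨f, hf⟩ := exists_forall_inner_pos_of_zero_notMem hcompact.isComplete
      ((convex_stdSimplex ℝ (Fin n)).linear_image L) h0
    refine ⟨f, fun i => hf _ ⟨Pi.single i 1, single_mem_stdSimplex ℝ i, ?_⟩⟩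
    simp only [L, Fintype.linearCombination_apply_single, one_smul]

theorem stmt7 (n : ℕ) {H : Type*} [NormedAddCommGroup H] [InnerProductSpace ℝ H]
    [CompleteSpace H]
    (v : Fin n → H) (hv : ∀ i, ‖v i‖ = 1) :
    Xor' (∃ f : H, ∀ i, 0 < ⟪f, v i⟫)
      (∃ p ∈ stdSimplex ℝ (Fin n), ∑ i, p i • v i = (0 : H)) :=
  stmt7_general n v
end

section
/- Gordan's theorem (finite-dimensional): for vectors x_1,...,x_n ∈ ℝ^d and signs y_i ∈ {±1}, exactly one of the following holds: (1) there exists w ∈ ℝ^d with y_i ⟨w, x_i⟩ > 0 for all i; (2) there exists p ∈ Δ_n with Σ_i p_i y_i x_i = 0. -/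
open scoped RealInnerProductSpace

/-!
With `v i = y i • x i`, the second alternative says that `0` lies in the convex hull of the `v i`.
A functional positive at every `v i` is positive on their convex hull, so the alternatives exclude
each other. Conversely, the convex hull of finitely many points is compact, so if it misses `0`,
Hahn–Banach separates it strictly from `0`, and Riesz representation turns the separating
functional into an inner product with some `w`.
-/

open Set

theorem convexHull_range_eq_image_stdSimplex {R E ι : Type*} [Field R] [LinearOrder R]
    [IsStrictOrderedRing R] [AddCommGroup E] [Module R E] [Fintype ι] (v : ι → E) :
    convexHull R (range v) = (fun p : ι → R ↦ ∑ i, p i • v i) '' stdSimplex R ι := by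
  classical
  rw [← convexHull_rangle_single_eq_stdSimplex]
  change _ = Fintype.linearCombination R v '' _
  rw [LinearMap.image_convexHull, ← range_comp]
  simp [Function.comp_def]

theorem exists_strongDual_pos_iff_zero_notMem_convexHull {E ι : Type*} [TopologicalSpace E]
    [AddCommGroup E] [Module ℝ E] [IsTopologicalAddGroup E] [ContinuousSMul ℝ E]
    [LocallyConvexSpace ℝ E] [T2Space E] [Finite ι] (v : ι → E) :
    (∃ f : StrongDual ℝ E, ∀ i, 0 < f (v i)) ↔ (0 : E) ∉ convexHull ℝ (range v) := by
  constructor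
  · rintro ⟨f, hf⟩ h0
    have : convexHull ℝ (range v) ⊆ {z | 0 < f z} :=
      convexHull_min (range_subset_iff.2 hf) (convex_halfSpace_gt f.isLinear 0)
    simpa using this h0
  · intro h0
    obtain ⟨f, u, hf0, hfu⟩ := geometric_hahn_banach_point_closed (convex_convexHull ℝ _)
      ((finite_range v).isClosed_convexHull ℝ) h0
    rw [map_zero] at hf0
    exact ⟨f, fun i ↦ hf0.trans (hfu _ (subset_convexHull ℝ _ (mem_range_self i)))⟩

theorem exists_inner_pos_iff_zero_notMem_convexHull {E ι : Type*} [NormedAddCommGroup E]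
    [InnerProductSpace ℝ E] [CompleteSpace E] [Finite ι] (v : ι → E) :
    (∃ w : E, ∀ i, 0 < ⟪w, v i⟫) ↔ (0 : E) ∉ convexHull ℝ (range v) := by
  rw [← exists_strongDual_pos_iff_zero_notMem_convexHull]
  constructor
  · rintro ⟨w, hw⟩
    exact ⟨innerSL ℝ w, hw⟩
  · rintro ⟨f, hf⟩
    refine ⟨(InnerProductSpace.toDual ℝ E).symm f, fun i ↦ ?_⟩
    rw [InnerProductSpace.toDual_symm_apply]
    exact hf i

theorem xor_exists_inner_pos_exists_stdSimplex_sum_eq_zero {E ι : Type*} [NormedAddCommGroup E]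
    [InnerProductSpace ℝ E] [CompleteSpace E] [Fintype ι] (v : ι → E) :
    Xor (∃ w : E, ∀ i, 0 < ⟪w, v i⟫) (∃ p ∈ stdSimplex ℝ ι, ∑ i, p i • v i = 0) := by
  rw [xor_iff_not_iff', exists_inner_pos_iff_zero_notMem_convexHull, not_not,
    convexHull_range_eq_image_stdSimplex]
  rfl

theorem stmt8_general (d n : ℕ) (x : Fin n → EuclideanSpace ℝ (Fin d)) (y : Fin n → ℝ) :
    Xor' (∃ w : EuclideanSpace ℝ (Fin d), ∀ i, 0 < y i * ⟪w, x i⟫)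
      (∃ p ∈ stdSimplex ℝ (Fin n), ∑ i, p i • (y i • x i) = (0 : EuclideanSpace ℝ (Fin d))) := by
  have h := xor_exists_inner_pos_exists_stdSimplex_sum_eq_zero fun i ↦ y i • x i
  simp only [real_inner_smul_right] at h
  exact h

theorem stmt8 (d n : ℕ) (x : Fin n → EuclideanSpace ℝ (Fin d)) (y : Fin n → ℝ)
    (hy : ∀ i, y i = 1 ∨ y i = -1) :
    Xor' (∃ w : EuclideanSpace ℝ (Fin d), ∀ i, 0 < y i * ⟪w, x i⟫)
      (∃ p ∈ stdSimplex ℝ (Fin n), ∑ i, p i • (y i • x i) = (0 : EuclideanSpace ℝ (Fin d))) :=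
  stmt8_general d n x y
end

section
/- Suppose the primal is infeasible and let δ > 0 be such that every f ∈ F_K with ‖f‖_K ≤ δ lies in the convex hull of {y_i φ̃_{x_i}}. Then |ρ_K| ≥ δ, i.e., ρ_K ≤ −δ. -/
open scoped RealInnerProductSpace

/-!
For a unit vector `f`, the point `-δ • f` lies in the ball of radius `δ`, hence is a convex
combination of the `v i`; the inner minimum over the simplex is then at most `⟪f, -δ • f⟫ = -δ`.
Taking the supremum over the unit sphere, which is nonempty because it contains `v 0`, gives
`ρ ≤ -δ`.
-/

section ConvexCombination

variable {ι H : Type*} [Fintype ι] [NormedAddCommGroup H] [InnerProductSpace ℝ H]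

theorem bddBelow_range_inner_sum_smul (f : H) (v : ι → H) :
    BddBelow (Set.range fun p : stdSimplex ℝ ι => ⟪f, ∑ i, (p : ι → ℝ) i • v i⟫) := by
  have hcont : Continuous fun p : ι → ℝ => ⟪f, ∑ i, p i • v i⟫ := by fun_prop
  refine ((isCompact_stdSimplex ℝ ι).bddBelow_image hcont.continuousOn).mono ?_
  rintro _ ⟨p, rfl⟩
  exact ⟨p, p.2, rfl⟩

theorem iInf_inner_sum_smul_le_neg_of_ball_in_hull {v : ι → H} {δ : ℝ} (hδ : 0 ≤ δ)
    (hball : ∀ g : H, ‖g‖ ≤ δ → ∃ p ∈ stdSimplex ℝ ι, g = ∑ i, p i • v i)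
    {f : H} (hf : ‖f‖ = 1) :
    ⨅ p : stdSimplex ℝ ι, ⟪f, ∑ i, (p : ι → ℝ) i • v i⟫ ≤ -δ := by
  obtain ⟨p, hp, hpf⟩ := hball (-(δ • f)) (by simp [norm_smul, hf, abs_of_nonneg hδ])
  calc ⨅ p : stdSimplex ℝ ι, ⟪f, ∑ i, (p : ι → ℝ) i • v i⟫
      ≤ ⟪f, ∑ i, p i • v i⟫ := ciInf_le (bddBelow_range_inner_sum_smul f v) ⟨p, hp⟩
    _ = ⟪f, -(δ • f)⟫ := by rw [← hpf]
    _ = -δ := by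
      rw [inner_neg_right, real_inner_smul_right, real_inner_self_eq_norm_sq, hf]
      ring

end ConvexCombination

theorem stmt9_general (n : ℕ) [NeZero n] {H : Type*} [NormedAddCommGroup H] [InnerProductSpace ℝ H]
    (v : Fin n → H) (hv : ∀ i, ‖v i‖ = 1)
    (ρ : ℝ)
    (hρ : ρ = ⨆ f : {f : H // ‖f‖ = 1},
      ⨅ p : stdSimplex ℝ (Fin n), ⟪(f : H), ∑ i, (p : Fin n → ℝ) i • v i⟫)
    (δ : ℝ) (hδ : 0 < δ)
    (hball : ∀ f : H, ‖f‖ ≤ δ → ∃ p ∈ stdSimplex ℝ (Fin n), f = ∑ i, p i • v i) :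
    ρ ≤ -δ := by
  have : Nonempty {f : H // ‖f‖ = 1} := ⟨⟨v 0, hv 0⟩⟩
  rw [hρ]
  exact ciSup_le fun f => iInf_inner_sum_smul_le_neg_of_ball_in_hull hδ.le hball f.2

theorem stmt9 (n : ℕ) [NeZero n] {H : Type*} [NormedAddCommGroup H] [InnerProductSpace ℝ H]
    [CompleteSpace H]
    (v : Fin n → H) (hv : ∀ i, ‖v i‖ = 1)
    (ρ : ℝ)
    (hρ : ρ = ⨆ f : {f : H // ‖f‖ = 1},
      ⨅ p : stdSimplex ℝ (Fin n), ⟪(f : H), ∑ i, (p : Fin n → ℝ) i • v i⟫)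
    (hinfeas : ¬ ∃ f : H, ∀ i, 0 < ⟪f, v i⟫)
    (δ : ℝ) (hδ : 0 < δ)
    (hball : ∀ f : H, ‖f‖ ≤ δ → ∃ p ∈ stdSimplex ℝ (Fin n), f = ∑ i, p i • v i) :
    ρ ≤ -δ :=
  stmt9_general n v hv ρ hρ δ hδ hball
end

section
/- Let W = {p ∈ Δ_n : Σ_i p_i y_i φ̃_{x_i} = 0} be nonempty and suppose ρ_K < 0. Then for every q ∈ Δ_n, the Euclidean distance from q to W satisfies dist(q, W) ≤ min{√2, √2 ‖q‖_G / |ρ_K|}, where ‖q‖_G = ‖Σ_i q_i y_i φ̃_{x_i}‖_K. -/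
/-!
The image `K = {∑ pᵢ vᵢ : p ∈ Δₙ}` of the simplex is a compact convex set with
`inf_{k ∈ K} ⟪f, k⟫ ≤ ρ < 0` for every unit vector `f`; by separation, `K` contains the closed ball
of radius `|ρ|`. Given `q ∈ Δₙ` with `G = ∑ qᵢ vᵢ ≠ 0`, pick `p ∈ Δₙ` with `∑ pᵢ vᵢ = -(|ρ| / ‖G‖) • G`.
The point of the segment `[q, p]` at parameter `t = ‖G‖ / (‖G‖ + |ρ|)` lies in `W`, and its distance
to `q` is `t ‖q - p‖ ≤ t √2`, since two points of the simplex are at Euclidean distance at most `√2`.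
-/

open scoped RealInnerProductSpace
open Set Metric

/-- Real `⨆` is `0` on families unbounded above and real `⨅` over an empty type is `0`,
so a negative value of `⨆ a, ⨅ b, F a b` rules out both degenerate cases. -/
theorem bddAbove_range_of_iSup_neg {ι : Sort*} {f : ι → ℝ} (h : ⨆ i, f i < 0) :
    BddAbove (range f) := by
  by_contra hf
  rw [Real.iSup_of_not_bddAbove hf] at h
  exact lt_irrefl 0 h

theorem nonempty_of_iSup_iInf_neg {α β : Sort*} {F : α → β → ℝ} (h : ⨆ a, ⨅ b, F a b < 0) :
    Nonempty β := by
  by_contra hβ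
  rw [not_nonempty_iff] at hβ
  simp only [Real.iInf_of_isEmpty, Real.iSup_const_zero] at h
  exact lt_irrefl 0 h

section Simplex

variable {ι : Type*} [Fintype ι]

theorem sum_sq_le_one_of_mem_stdSimplex {p : ι → ℝ} (hp : p ∈ stdSimplex ℝ ι) :
    ∑ i, p i ^ 2 ≤ 1 :=
  calc ∑ i, p i ^ 2 ≤ ∑ i, p i :=
        Finset.sum_le_sum fun i _ => pow_le_of_le_one (hp.1 i) (stdSimplex.le_one ⟨p, hp⟩ i)
          two_ne_zero
    _ = 1 := hp.2

theorem dist_toLp_le_sqrt_two_of_mem_stdSimplex {p q : ι → ℝ} (hp : p ∈ stdSimplex ℝ ι)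
    (hq : q ∈ stdSimplex ℝ ι) : dist (WithLp.toLp 2 p) (WithLp.toLp 2 q) ≤ √2 := by
  rw [EuclideanSpace.dist_eq]
  refine Real.sqrt_le_sqrt ?_
  calc ∑ i, dist (p i) (q i) ^ 2 ≤ ∑ i, (p i ^ 2 + q i ^ 2) :=
        Finset.sum_le_sum fun i _ => by
          rw [Real.dist_eq, sq_abs]
          nlinarith [mul_nonneg (hp.1 i) (hq.1 i)]
    _ ≤ 1 + 1 := by
        rw [Finset.sum_add_distrib]
        exact add_le_add (sum_sq_le_one_of_mem_stdSimplex hp) (sum_sq_le_one_of_mem_stdSimplex hq)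
    _ = 2 := one_add_one_eq_two

/-- The witness is the point of the segment `[q, p]` at parameter `(1 + s)⁻¹`. -/
theorem exists_mem_stdSimplex_map_eq_zero_dist_le {E : Type*} [AddCommGroup E] [Module ℝ E]
    (μ : (ι → ℝ) →ₗ[ℝ] E) {p q : ι → ℝ} (hp : p ∈ stdSimplex ℝ ι) (hq : q ∈ stdSimplex ℝ ι)
    {s : ℝ} (hs : 0 ≤ s) (hpq : μ p = -s • μ q) :
    ∃ w ∈ stdSimplex ℝ ι, μ w = 0 ∧ dist (WithLp.toLp 2 q) (WithLp.toLp 2 w) ≤ √2 * (1 + s)⁻¹ := by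
  set t := (1 + s)⁻¹
  have ht0 : 0 ≤ t := by positivity
  have ht1 : t ≤ 1 := inv_le_one_of_one_le₀ (by linarith)
  refine ⟨AffineMap.lineMap q p t, (convex_stdSimplex ℝ ι).lineMap_mem hq hp ⟨ht0, ht1⟩, ?_, ?_⟩
  · have hcoeff : 1 - t + t * -s = 0 := by
      simp only [t]
      field_simp
      ring
    rw [AffineMap.lineMap_apply_module, map_add, map_smul, map_smul, hpq, smul_smul, ← add_smul,
      hcoeff, zero_smul]
  · have hlineMap : WithLp.toLp 2 (AffineMap.lineMap q p t) =
        AffineMap.lineMap (WithLp.toLp 2 q) (WithLp.toLp 2 p) t := by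
      simp only [AffineMap.lineMap_apply_module, WithLp.toLp_add, WithLp.toLp_smul]
    rw [hlineMap, dist_left_lineMap, Real.norm_of_nonneg ht0, mul_comm]
    exact mul_le_mul_of_nonneg_right (dist_toLp_le_sqrt_two_of_mem_stdSimplex hq hp) ht0

theorem exists_mem_stdSimplex_map_eq_zero_dist_le_of_closedBall_subset {E : Type*}
    [NormedAddCommGroup E] [NormedSpace ℝ E] (μ : (ι → ℝ) →ₗ[ℝ] E) {r : ℝ} (hr : 0 < r)
    (hball : closedBall 0 r ⊆ μ '' stdSimplex ℝ ι) {q : ι → ℝ} (hq : q ∈ stdSimplex ℝ ι) :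
    ∃ w ∈ stdSimplex ℝ ι, μ w = 0 ∧
      dist (WithLp.toLp 2 q) (WithLp.toLp 2 w) ≤ min (√2) (√2 * ‖μ q‖ / r) := by
  rcases eq_or_ne (μ q) 0 with hq0 | hq0
  · refine ⟨q, hq, hq0, ?_⟩
    rw [dist_self, hq0, norm_zero, mul_zero, zero_div]
    exact le_min (Real.sqrt_nonneg 2) le_rfl
  have hqpos : 0 < ‖μ q‖ := norm_pos_iff.mpr hq0
  set s := r / ‖μ q‖
  have hs : 0 < s := div_pos hr hqpos
  have hnorm : ‖-s • μ q‖ ≤ r := by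
    rw [norm_smul, norm_neg, Real.norm_of_nonneg hs.le, div_mul_cancel₀ _ hqpos.ne']
  obtain ⟨p, hp, hμp⟩ := hball (mem_closedBall_zero_iff.mpr hnorm)
  obtain ⟨w, hw, hμw, hdist⟩ := exists_mem_stdSimplex_map_eq_zero_dist_le μ hp hq hs.le hμp
  refine ⟨w, hw, hμw, hdist.trans ?_⟩
  rw [mul_div_assoc, ← inv_div]
  exact le_min (mul_le_of_le_one_right (Real.sqrt_nonneg 2) (inv_le_one_of_one_le₀ (by linarith)))
    (mul_le_mul_of_nonneg_left (inv_anti₀ hs (by linarith)) (Real.sqrt_nonneg 2))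

end Simplex

theorem closedBall_subset_range_of_iInf_inner_le {H : Type*} [NormedAddCommGroup H]
    [InnerProductSpace ℝ H] [CompleteSpace H] {ι : Type*} [Nonempty ι] {g : ι → H}
    (hconv : Convex ℝ (range g)) (hclosed : IsClosed (range g)) {r : ℝ}
    (h : ∀ f : H, ‖f‖ = 1 → ⨅ i, ⟪f, g i⟫ ≤ -r) : closedBall 0 r ⊆ range g := by
  intro x hx
  by_contra hxg
  obtain ⟨φ, u, hφx, hφg⟩ := geometric_hahn_banach_point_closed hconv hclosed hxg
  set z := (InnerProductSpace.toDual ℝ H).symm φ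
  have hz : ∀ y, ⟪z, y⟫ = φ y := fun y => InnerProductSpace.toDual_symm_apply
  have hz0 : z ≠ 0 := by
    rintro hz0
    obtain ⟨i⟩ := ‹Nonempty ι›
    have hφi := hφg (g i) ⟨i, rfl⟩
    simp only [← hz, hz0, inner_zero_left] at hφx hφi
    linarith
  set e := ‖z‖⁻¹ • z
  have he : ‖e‖ = 1 := norm_smul_inv_norm (𝕜 := ℝ) hz0
  have hpos : 0 < ‖z‖⁻¹ := by positivity
  have hez : ∀ y, ⟪e, y⟫ = ‖z‖⁻¹ * φ y := fun y => by rw [real_inner_smul_left, hz]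
  have hx_lt : ⟪e, x⟫ < ‖z‖⁻¹ * u := by
    rw [hez]
    exact mul_lt_mul_of_pos_left hφx hpos
  have hle_iInf : ‖z‖⁻¹ * u ≤ ⨅ i, ⟪e, g i⟫ := le_ciInf fun i => by
    rw [hez]
    exact mul_le_mul_of_nonneg_left (hφg _ ⟨i, rfl⟩).le hpos.le
  have hx_ge : -r ≤ ⟪e, x⟫ := by
    have hinner := neg_le_of_abs_le (abs_real_inner_le_norm e x)
    rw [he, one_mul] at hinner
    linarith [mem_closedBall_zero_iff.mp hx]
  linarith [h e he]

theorem closedBall_subset_image_stdSimplex {ι : Type*} [Fintype ι] {H : Type*}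
    [NormedAddCommGroup H] [InnerProductSpace ℝ H] [CompleteSpace H] [Nonempty (stdSimplex ℝ ι)]
    (μ : (ι → ℝ) →ₗ[ℝ] H) {r : ℝ}
    (h : ∀ f : H, ‖f‖ = 1 → ⨅ p : stdSimplex ℝ ι, ⟪f, μ p⟫ ≤ -r) :
    closedBall 0 r ⊆ μ '' stdSimplex ℝ ι := by
  rw [image_eq_range]
  refine closedBall_subset_range_of_iInf_inner_le ?_ ?_ h
  · rw [← image_eq_range]
    exact (convex_stdSimplex ℝ ι).linear_image μ
  · rw [← image_eq_range]
    exact ((isCompact_stdSimplex ℝ ι).image μ.continuous_of_finiteDimensional).isClosed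

theorem stmt11_general (n : ℕ) {H : Type*} [NormedAddCommGroup H] [InnerProductSpace ℝ H]
    [CompleteSpace H]
    (v : Fin n → H)
    (ρ : ℝ)
    (hρ : ρ = ⨆ f : {f : H // ‖f‖ = 1},
      ⨅ p : stdSimplex ℝ (Fin n), ⟪(f : H), ∑ i, (p : Fin n → ℝ) i • v i⟫)
    (hneg : ρ < 0)
    (W : Set (EuclideanSpace ℝ (Fin n)))
    (hW : W = {p : EuclideanSpace ℝ (Fin n) |
      (∀ i, 0 ≤ p i) ∧ ∑ i, p i = 1 ∧ ∑ i, p i • v i = (0 : H)})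
    (q : EuclideanSpace ℝ (Fin n)) (hq1 : ∀ i, 0 ≤ q i) (hq2 : ∑ i, q i = 1) :
    Metric.infDist q W ≤ min (Real.sqrt 2) (Real.sqrt 2 * ‖∑ i, q i • v i‖ / |ρ|) := by
  set μ := Fintype.linearCombination ℝ v
  have hρμ : ρ = ⨆ f : {f : H // ‖f‖ = 1}, ⨅ p : stdSimplex ℝ (Fin n), ⟪(f : H), μ p⟫ := by
    simpa only [μ, Fintype.linearCombination_apply] using hρ
  have hρneg := hρμ ▸ hneg
  have := nonempty_of_iSup_iInf_neg hρneg
  have hball : closedBall 0 |ρ| ⊆ μ '' stdSimplex ℝ (Fin n) :=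
    closedBall_subset_image_stdSimplex μ fun f hf =>
      (le_ciSup (bddAbove_range_of_iSup_neg hρneg) ⟨f, hf⟩).trans_eq
        (by rw [← hρμ, abs_of_neg hneg, neg_neg])
  obtain ⟨w, hw, hμw, hdist⟩ := exists_mem_stdSimplex_map_eq_zero_dist_le_of_closedBall_subset μ
    (abs_pos.mpr hneg.ne) hball (q := q.ofLp) ⟨hq1, hq2⟩
  have hwW : WithLp.toLp 2 w ∈ W := by
    rw [hW]
    exact ⟨hw.1, hw.2, by simpa only [μ, Fintype.linearCombination_apply] using hμw⟩
  calc infDist q W ≤ dist q (WithLp.toLp 2 w) := infDist_le_dist_of_mem hwW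
    _ ≤ _ := by simpa only [μ, Fintype.linearCombination_apply, WithLp.toLp_ofLp] using hdist

theorem stmt11 (n : ℕ) [NeZero n] {H : Type*} [NormedAddCommGroup H] [InnerProductSpace ℝ H]
    [CompleteSpace H]
    (v : Fin n → H) (hv : ∀ i, ‖v i‖ = 1)
    (ρ : ℝ)
    (hρ : ρ = ⨆ f : {f : H // ‖f‖ = 1},
      ⨅ p : stdSimplex ℝ (Fin n), ⟪(f : H), ∑ i, (p : Fin n → ℝ) i • v i⟫)
    (hneg : ρ < 0)
    (W : Set (EuclideanSpace ℝ (Fin n)))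
    (hW : W = {p : EuclideanSpace ℝ (Fin n) |
      (∀ i, 0 ≤ p i) ∧ ∑ i, p i = 1 ∧ ∑ i, p i • v i = (0 : H)})
    (hWne : W.Nonempty)
    (q : EuclideanSpace ℝ (Fin n)) (hq1 : ∀ i, 0 ≤ q i) (hq2 : ∑ i, q i = 1) :
    Metric.infDist q W ≤ min (Real.sqrt 2) (Real.sqrt 2 * ‖∑ i, q i • v i‖ / |ρ|) :=
  stmt11_general n v ρ hρ hneg W hW q hq1 hq2
end

section
/- Base case of the excessive gap inequality: with p* = argmin_{p∈Δ_n} d(p), μ₀ = 2λ, α₀ = p*, and p₀ = p_{μ₀}(α₀), one has L_{μ₀}(α₀) ≤ −(1/2) p₀ᵀG p₀, where λ satisfies pᵀGp ≤ λ‖p‖_#² for the norm ‖·‖_# with respect to which d is 1-strongly convex. -/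
/-! Evaluating the supremum at its maximiser `p₀` reduces the claim to
`(p₀ - p*)ᵀ G (p₀ - p*) ≤ 4λ d(p₀)`, and the left side is at most `λ ‖p₀ - p*‖_#² ≤ 2λ d(p₀)`
by the choice of `λ` and the strong convexity of `d` around `p*`. -/

open Matrix

theorem Matrix.IsSymm.sub_dotProduct_mulVec_sub {n R : Type*} [Fintype n] [CommRing R]
    {G : Matrix n n R} (hG : G.IsSymm) (x y : n → R) :
    (x - y) ⬝ᵥ G *ᵥ (x - y) = x ⬝ᵥ G *ᵥ x - 2 * (x ⬝ᵥ G *ᵥ y) + y ⬝ᵥ G *ᵥ y := by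
  have hsymm : y ⬝ᵥ G *ᵥ x = x ⬝ᵥ G *ᵥ y := by
    rw [dotProduct_mulVec, ← mulVec_transpose, hG.eq, dotProduct_comm]
  simp only [mulVec_sub, dotProduct_sub, sub_dotProduct, hsymm]
  ring

theorem stmt18_general (n : ℕ) (G : Matrix (Fin n) (Fin n) ℝ) (hG : G.PosSemidef)
    (N : (Fin n → ℝ) → ℝ) (lam : ℝ) (hlam : 0 ≤ lam)
    (hquad : ∀ p : Fin n → ℝ, p ⬝ᵥ G.mulVec p ≤ lam * N p ^ 2)
    (d : (Fin n → ℝ) → ℝ)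
    (pstar : Fin n → ℝ)
    (hd : ∀ p ∈ stdSimplex ℝ (Fin n), (1 / 2) * N (p - pstar) ^ 2 ≤ d p)
    (p0 : Fin n → ℝ) (hp0 : p0 ∈ stdSimplex ℝ (Fin n))
    (hp0min : ∀ p ∈ stdSimplex ℝ (Fin n),
      p0 ⬝ᵥ G.mulVec pstar + (2 * lam) * d p0 ≤ p ⬝ᵥ G.mulVec pstar + (2 * lam) * d p) :
    (⨆ p : stdSimplex ℝ (Fin n),
        (-((p : Fin n → ℝ) ⬝ᵥ G.mulVec pstar) - (2 * lam) * d (p : Fin n → ℝ)))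
      + (1 / 2) * (pstar ⬝ᵥ G.mulVec pstar)
      ≤ -(1 / 2) * (p0 ⬝ᵥ G.mulVec p0) := by
  have : Nonempty (stdSimplex ℝ (Fin n)) := ⟨⟨p0, hp0⟩⟩
  have hsup : (⨆ p : stdSimplex ℝ (Fin n),
      (-((p : Fin n → ℝ) ⬝ᵥ G.mulVec pstar) - (2 * lam) * d (p : Fin n → ℝ)))
      ≤ -(p0 ⬝ᵥ G.mulVec pstar) - (2 * lam) * d p0 :=
    ciSup_le fun p => by linarith [hp0min p p.2]
  have hdist : (1 / 2) * N (p0 - pstar) ^ 2 ≤ d p0 := hd p0 hp0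
  have hd0 : 0 ≤ d p0 := le_trans (by positivity) hdist
  have hgap : (p0 - pstar) ⬝ᵥ G *ᵥ (p0 - pstar) ≤ 2 * ((2 * lam) * d p0) :=
    calc (p0 - pstar) ⬝ᵥ G *ᵥ (p0 - pstar) ≤ lam * N (p0 - pstar) ^ 2 := hquad _
      _ ≤ lam * (2 * d p0) := by gcongr; linarith
      _ ≤ 2 * ((2 * lam) * d p0) := by nlinarith
  rw [(isHermitian_iff_isSymm.mp hG.isHermitian).sub_dotProduct_mulVec_sub] at hgap
  linarith

theorem stmt18 (n : ℕ) (G : Matrix (Fin n) (Fin n) ℝ) (hG : G.PosSemidef)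
    (N : (Fin n → ℝ) → ℝ) (lam : ℝ) (hlam : 0 ≤ lam)
    (hquad : ∀ p : Fin n → ℝ, p ⬝ᵥ G.mulVec p ≤ lam * N p ^ 2)
    (d : (Fin n → ℝ) → ℝ)
    (pstar : Fin n → ℝ) (hpstar : pstar ∈ stdSimplex ℝ (Fin n))
    (hd : ∀ p ∈ stdSimplex ℝ (Fin n), (1 / 2) * N (p - pstar) ^ 2 ≤ d p)
    (p0 : Fin n → ℝ) (hp0 : p0 ∈ stdSimplex ℝ (Fin n))
    (hp0min : ∀ p ∈ stdSimplex ℝ (Fin n),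
      p0 ⬝ᵥ G.mulVec pstar + (2 * lam) * d p0 ≤ p ⬝ᵥ G.mulVec pstar + (2 * lam) * d p) :
    (⨆ p : stdSimplex ℝ (Fin n),
        (-((p : Fin n → ℝ) ⬝ᵥ G.mulVec pstar) - (2 * lam) * d (p : Fin n → ℝ)))
      + (1 / 2) * (pstar ⬝ᵥ G.mulVec pstar)
      ≤ -(1 / 2) * (p0 ⬝ᵥ G.mulVec p0) :=
  stmt18_general n G hG N lam hlam hquad d pstar hd p0 hp0 hp0min
end
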